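/- For every flat layout L, coal(L) is the unique flat layout of minimal rank whose layout function equals Φ_L: if L' is any flat layout with Φ_{L'} = Φ_L (same size and equal layout functions), then rank(coal(L)) ≤ rank(L'), and equality holds if and only if L' = coal(L). -/

import Mathlib

/-- A flat layout, represented as its list of modes `(sᵢ, dᵢ)`:
the first component of each mode is a shape entry, the second a stride entry. -/
abbrev FlatLayout := List (ℕ × ℕ)

namespace FlatLayout

/-- Validity of a flat layout: every shape entry is a positive integer. -/
def Valid (L : FlatLayout) : Prop := ∀ p ∈ L, 0 < p.1

/-- The size of a flat layout: the product of its shape entries. -/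
def size (L : FlatLayout) : ℕ := (L.map Prod.fst).prod

/-- The cosize of a flat layout: `1 + Σ (sᵢ - 1) * dᵢ`. -/
def cosize (L : FlatLayout) : ℕ := 1 + (L.map fun p => (p.1 - 1) * p.2).sum

/-- The rank of a flat layout: its number of modes. -/
def rank (L : FlatLayout) : ℕ := L.length

/-- The layout function `Φ_L`: `Φ_L(x) = Σ xᵢ·dᵢ` where
`xᵢ = ⌊x / (s₁⋯sᵢ₋₁)⌋ mod sᵢ`. -/
def phi : FlatLayout → ℕ → ℕ
  | [], _ => 0
  | (s, d) :: rest, x => x % s * d + phi rest (x / s)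

/-- `squeeze L` deletes every mode whose shape entry equals `1`. -/
def squeeze (L : FlatLayout) : FlatLayout := L.filter fun p => p.1 != 1

/-- `filterZeros L` deletes every mode whose stride entry equals `0`. -/
def filterZeros (L : FlatLayout) : FlatLayout := L.filter fun p => p.2 != 0

/-- The ordering on modes: `(s,d) ⪯ (s',d')` iff `d < d'`, or `d = d'` and `s ≤ s'`. -/
def ModeLE (p q : ℕ × ℕ) : Prop := p.2 < q.2 ∨ (p.2 = q.2 ∧ p.1 ≤ q.1)

instance : DecidableRel ModeLE := fun p q => by unfold ModeLE; infer_instance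

/-- A flat layout is sorted if its consecutive modes are `⪯`-increasing. -/
def Sorted (L : FlatLayout) : Prop := L.Chain' ModeLE

/-- `sortL L` stably sorts the modes of `L` with respect to `⪯`. -/
def sortL (L : FlatLayout) : FlatLayout := L.mergeSort fun p q => decide (ModeLE p q)

/-- A flat layout is coalesced if no shape entry equals `1` and
for consecutive modes, `sᵢ·dᵢ ≠ dᵢ₊₁`. -/
def Coalesced (L : FlatLayout) : Prop :=
  (∀ p ∈ L, p.1 ≠ 1) ∧ L.Chain' fun p q => p.1 * p.2 ≠ q.2

/-- Combine adjacent modes `(s,d), (s',d')` with `d' = s·d` into `(s·s', d)`, repeatedly. -/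
def coalAux : List (ℕ × ℕ) → List (ℕ × ℕ)
  | [] => []
  | p :: rest =>
    match coalAux rest with
    | [] => [p]
    | q :: rest' =>
        if p.1 * p.2 = q.2 then (p.1 * q.1, p.2) :: rest' else p :: q :: rest'

/-- Coalesce of a flat layout: squeeze, then repeatedly combine adjacent modes
`(s,d), (s',d')` with `d' = s·d` into `(s·s', d)`. -/
def coal (L : FlatLayout) : FlatLayout := coalAux (squeeze L)

/-- Compactness: the layout function takes values in `{0, …, cosize L - 1}` and induces a
bijection `{0, …, size L - 1} → {0, …, cosize L - 1}`. -/
def Compact (L : FlatLayout) : Prop :=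
  Set.BijOn (phi L) {x | x < size L} {y | y < cosize L}

/-- `B` is a complement of `A` (written `A ⊥ B`) if the concatenation `A ⋆ B` is compact. -/
def Perp (A B : FlatLayout) : Prop := Compact (A ++ B)

/-- `A` is complementable if, writing `sort(squeeze A) = (s₁,…,sₘ):(d₁,…,dₘ)`,
`sᵢ·dᵢ` divides `dᵢ₊₁` for all `1 ≤ i < m`. -/
def Complementable (A : FlatLayout) : Prop :=
  (sortL (squeeze A)).Chain' fun p q => p.1 * p.2 ∣ q.2

/-- `B` is an `N`-complement of `A` if `B` is a complement of `A`
and `size A * size B = N`. -/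
def IsNComplement (A B : FlatLayout) (N : ℕ) : Prop :=
  Perp A B ∧ size A * size B = N

/-- `A` is `N`-complementable if, writing `sort(squeeze A) = (s₁,…,sₘ):(d₁,…,dₘ)`,
`sᵢ·dᵢ ∣ dᵢ₊₁` for all `1 ≤ i < m`, and `sₘ·dₘ ∣ N`. -/
def NComplementable (A : FlatLayout) (N : ℕ) : Prop :=
  ((sortL (squeeze A)).Chain' fun p q => p.1 * p.2 ∣ q.2) ∧
  ∀ p, (sortL (squeeze A)).getLast? = some p → p.1 * p.2 ∣ N

/-- Given `l = [(s₁,d₁),…,(sₘ,dₘ)]`, the layout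
`C = (d₁, d₂/(s₁d₁), …, dₘ/(sₘ₋₁dₘ₋₁)) : (1, s₁d₁, …, sₘ₋₁dₘ₋₁)`. -/
def compModes (l : List (ℕ × ℕ)) : List (ℕ × ℕ) :=
  match l with
  | [] => []
  | (_, d₁) :: t =>
      (d₁, 1) :: (l.zip t).map fun pq => (pq.2.2 / (pq.1.1 * pq.1.2), pq.1.1 * pq.1.2)

/-- The complement `comp A = coal C` of a complementable flat layout `A`. -/
def comp (A : FlatLayout) : FlatLayout := coal (compModes (sortL (squeeze A)))

/-- Given `l = [(s₁,d₁),…,(sₘ,dₘ)]` and `N`, the layout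
`C = (d₁, d₂/(s₁d₁), …, dₘ/(sₘ₋₁dₘ₋₁), N/(sₘdₘ)) : (1, s₁d₁, …, sₘ₋₁dₘ₋₁, sₘdₘ)`. -/
def compNModes (l : List (ℕ × ℕ)) (N : ℕ) : List (ℕ × ℕ) :=
  match l.getLast? with
  | none => [(N, 1)]
  | some (sm, dm) => compModes l ++ [(N / (sm * dm), sm * dm)]

/-- The `N`-complement `comp(A, N) = coal C` of an `N`-complementable flat layout `A`. -/
def compN (A : FlatLayout) (N : ℕ) : FlatLayout :=
  coal (compNModes (sortL (squeeze A)) N)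

/-- `L` is tractable if, writing `sort L = (s₁,…,sₘ):(d₁,…,dₘ)`, for every `1 ≤ i < m`
either `dᵢ = 0` or `sᵢ·dᵢ` divides `dᵢ₊₁`. -/
def Tractable (L : FlatLayout) : Prop :=
  (sortL L).Chain' fun p q => p.2 = 0 ∨ p.1 * p.2 ∣ q.2

end FlatLayout

/-!
The head mode `(s, d)` of a valid coalesced layout can be read off its layout function:
`d = Φ(1)`, `Φ(x) = x·d` for `x < s`, and `Φ(s) = d₂ ≠ s·d` if there is a second mode
`(s₂, d₂)` (otherwise `s` is the size). Since `Φ_t(y) = Φ(y·s)` recovers the tail, two valid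
coalesced layouts with the same size and layout function are equal. `coal L` is such a layout
for `Φ_L`, obtained from `L` by deleting and merging modes; so any `L'` with `Φ_{L'} = Φ_L` has
`coal L' = coal L`, and `coal L'` has fewer modes than `L'` unless `coal L' = L'`.
-/

namespace FlatLayout

@[simp] lemma phi_cons (s d : ℕ) (t : FlatLayout) (x : ℕ) :
    phi ((s, d) :: t) x = x % s * d + phi t (x / s) := rfl

@[simp] lemma phi_zero (L : FlatLayout) : phi L 0 = 0 := by
  induction L with
  | nil => rfl
  | cons p t ih => simp [phi, ih]

@[simp] lemma size_nil : size [] = 1 := rfl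

@[simp] lemma size_cons (p : ℕ × ℕ) (t : FlatLayout) : size (p :: t) = p.1 * size t := by
  simp [size]

lemma valid_cons {p : ℕ × ℕ} {t : FlatLayout} : Valid (p :: t) ↔ 0 < p.1 ∧ Valid t :=
  List.forall_mem_cons

lemma Valid.size_pos {L : FlatLayout} (hL : L.Valid) : 0 < size L :=
  List.prod_pos fun _ hs => by
    obtain ⟨p, hp, rfl⟩ := List.mem_map.mp hs
    exact hL p hp

lemma phi_cons_of_lt {s x : ℕ} (d : ℕ) (t : FlatLayout) (hx : x < s) :
    phi ((s, d) :: t) x = x * d := by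
  simp [Nat.mod_eq_of_lt hx, Nat.div_eq_of_lt hx]

lemma phi_cons_mul {s : ℕ} (d : ℕ) (t : FlatLayout) (hs : 0 < s) (y : ℕ) :
    phi ((s, d) :: t) (y * s) = phi t y := by
  simp [Nat.mul_div_cancel y hs]

lemma phi_cons_self {s : ℕ} (d : ℕ) (s₂ d₂ : ℕ) (t : FlatLayout) (hs : 0 < s) (hs₂ : 1 < s₂) :
    phi ((s, d) :: (s₂, d₂) :: t) s = d₂ := by
  have h := phi_cons_mul d ((s₂, d₂) :: t) hs 1
  rw [one_mul] at h
  rw [h, phi_cons_of_lt d₂ t hs₂, one_mul]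

lemma phi_squeeze (L : FlatLayout) (x : ℕ) : phi (squeeze L) x = phi L x := by
  induction L generalizing x with
  | nil => rfl
  | cons p t ih =>
    obtain ⟨s, d⟩ := p
    by_cases hs : s = 1
    · subst hs
      simp [squeeze, Nat.mod_one, ← ih]
    · simp [squeeze, hs, ← ih]

lemma size_squeeze (L : FlatLayout) : size (squeeze L) = size L := by
  induction L with
  | nil => rfl
  | cons p t ih =>
    by_cases hs : p.1 = 1 <;> simp [squeeze, hs, ← ih]

lemma Valid.squeeze {L : FlatLayout} (hL : L.Valid) : (squeeze L).Valid :=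
  fun p hp => hL p (List.mem_of_mem_filter hp)

lemma shape_ne_one_of_mem_squeeze {L : FlatLayout} {p : ℕ × ℕ} (hp : p ∈ squeeze L) : p.1 ≠ 1 :=
  by simpa using (List.mem_filter.mp hp).2

lemma length_squeeze_le (L : FlatLayout) : (squeeze L).length ≤ L.length :=
  List.length_filter_le _ _

lemma squeeze_eq_self_of_length_eq {L : FlatLayout} (h : (squeeze L).length = L.length) :
    squeeze L = L :=
  List.filter_eq_self.mpr (List.length_filter_eq_length_iff.mp h)

def consMerge (p : ℕ × ℕ) : FlatLayout → FlatLayout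
  | [] => [p]
  | q :: l => if p.1 * p.2 = q.2 then (p.1 * q.1, p.2) :: l else p :: q :: l

lemma coalAux_cons (p : ℕ × ℕ) (l : FlatLayout) :
    coalAux (p :: l) = consMerge p (coalAux l) := rfl

lemma phi_consMerge (p : ℕ × ℕ) (l : FlatLayout) (x : ℕ) :
    phi (consMerge p l) x = phi (p :: l) x := by
  obtain ⟨s, d⟩ := p
  rcases l with _ | ⟨⟨s', d'⟩, l⟩
  · rfl
  · by_cases hm : s * d = d'
    · subst hm
      simp only [consMerge, if_true, phi_cons, Nat.mod_mul, Nat.div_div_eq_div_mul]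
      ring
    · simp [consMerge, hm]

lemma size_consMerge (p : ℕ × ℕ) (l : FlatLayout) : size (consMerge p l) = size (p :: l) := by
  rcases l with _ | ⟨q, l⟩
  · rfl
  · by_cases hm : p.1 * p.2 = q.2 <;> simp [consMerge, hm, mul_assoc]

lemma length_consMerge_le (p : ℕ × ℕ) (l : FlatLayout) :
    (consMerge p l).length ≤ l.length + 1 := by
  rcases l with _ | ⟨q, l⟩
  · rfl
  · by_cases hm : p.1 * p.2 = q.2 <;> simp [consMerge, hm]

lemma consMerge_eq_cons_of_length_eq {p : ℕ × ℕ} {l : FlatLayout}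
    (h : (consMerge p l).length = l.length + 1) : consMerge p l = p :: l := by
  rcases l with _ | ⟨q, l⟩
  · rfl
  · by_cases hm : p.1 * p.2 = q.2 <;> simp_all [consMerge]

lemma Valid.consMerge {p : ℕ × ℕ} {l : FlatLayout} (h : Valid (p :: l)) :
    (consMerge p l).Valid := by
  rcases l with _ | ⟨q, l⟩
  · exact h
  · simp only [valid_cons] at h
    by_cases hm : p.1 * p.2 = q.2
    · simp [FlatLayout.consMerge, hm, valid_cons, h, Nat.mul_pos h.1 h.2.1]
    · simpa [FlatLayout.consMerge, hm, valid_cons] using h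

lemma Coalesced.consMerge {p : ℕ × ℕ} {l : FlatLayout} (hp : p.1 ≠ 1) (hl : l.Coalesced) :
    (consMerge p l).Coalesced := by
  obtain ⟨hl₁, hl₂⟩ := hl
  rcases l with _ | ⟨q, l⟩
  · exact ⟨by simpa [FlatLayout.consMerge] using hp, List.isChain_singleton p⟩
  · by_cases hm : p.1 * p.2 = q.2
    · simp only [FlatLayout.consMerge, hm, if_true]
      refine ⟨List.forall_mem_cons.mpr
        ⟨fun h => hp (mul_eq_one.mp h).1, (List.forall_mem_cons.mp hl₁).2⟩, ?_⟩
      rcases l with _ | ⟨r, l⟩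
      · exact List.isChain_singleton _
      · obtain ⟨hqr, hl₂⟩ := List.isChain_cons_cons.mp hl₂
        refine List.isChain_cons_cons.mpr ⟨?_, hl₂⟩
        convert hqr using 1
        rw [← hm]
        ring
    · simp only [FlatLayout.consMerge, hm, if_false]
      exact ⟨List.forall_mem_cons.mpr ⟨hp, hl₁⟩, List.isChain_cons_cons.mpr ⟨hm, hl₂⟩⟩

lemma phi_coalAux (l : FlatLayout) (x : ℕ) : phi (coalAux l) x = phi l x := by
  induction l generalizing x with
  | nil => rfl
  | cons p l ih =>
    obtain ⟨s, d⟩ := p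
    rw [coalAux_cons, phi_consMerge, phi_cons, phi_cons, ih]

lemma size_coalAux (l : FlatLayout) : size (coalAux l) = size l := by
  induction l with
  | nil => rfl
  | cons p l ih => rw [coalAux_cons, size_consMerge, size_cons, size_cons, ih]

lemma Valid.coalAux {l : FlatLayout} (hl : l.Valid) : Valid (coalAux l) := by
  induction l with
  | nil => exact hl
  | cons p l ih =>
    obtain ⟨hp, hl⟩ := valid_cons.mp hl
    rw [coalAux_cons]
    exact Valid.consMerge (valid_cons.mpr ⟨hp, ih hl⟩)

lemma coalesced_coalAux {l : FlatLayout} (hl : ∀ p ∈ l, p.1 ≠ 1) : Coalesced (coalAux l) := by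
  induction l with
  | nil => exact ⟨nofun, List.isChain_nil⟩
  | cons p l ih =>
    obtain ⟨hp, hl⟩ := List.forall_mem_cons.mp hl
    rw [coalAux_cons]
    exact (ih hl).consMerge hp

lemma length_coalAux_le (l : FlatLayout) : (coalAux l).length ≤ l.length := by
  induction l with
  | nil => rfl
  | cons p l ih =>
    rw [coalAux_cons]
    exact (length_consMerge_le p _).trans (Nat.succ_le_succ ih)

lemma coalAux_eq_self_of_length_eq {l : FlatLayout} (h : (coalAux l).length = l.length) :
    coalAux l = l := by
  induction l with
  | nil => rfl
  | cons p l ih =>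
    rw [coalAux_cons] at h ⊢
    have hle := length_consMerge_le p (coalAux l)
    have hl : (coalAux l).length = l.length := by
      have := length_coalAux_le l
      simp only [List.length_cons] at h
      omega
    rw [ih hl] at h ⊢
    exact consMerge_eq_cons_of_length_eq h

lemma phi_coal (L : FlatLayout) : phi (coal L) = phi L :=
  funext fun x => by rw [coal, phi_coalAux, phi_squeeze]

lemma size_coal (L : FlatLayout) : size (coal L) = size L := by
  rw [coal, size_coalAux, size_squeeze]

lemma Valid.coal {L : FlatLayout} (hL : L.Valid) : (coal L).Valid :=
  hL.squeeze.coalAux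

lemma coalesced_coal (L : FlatLayout) : (coal L).Coalesced :=
  coalesced_coalAux fun _ => shape_ne_one_of_mem_squeeze

lemma rank_coal_le (L : FlatLayout) : rank (coal L) ≤ rank L :=
  (length_coalAux_le _).trans (length_squeeze_le L)

lemma coal_eq_self_of_rank_eq {L : FlatLayout} (h : rank (coal L) = rank L) : coal L = L := by
  have h' : (coalAux (squeeze L)).length = L.length := h
  have h₁ := length_coalAux_le (squeeze L)
  have h₂ := length_squeeze_le L
  rw [coal, coalAux_eq_self_of_length_eq (by omega), squeeze_eq_self_of_length_eq (by omega)]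

lemma shape_le_size_cons (p : ℕ × ℕ) {t : FlatLayout} (ht : t.Valid) : p.1 ≤ size (p :: t) := by
  simpa using Nat.le_mul_of_pos_right p.1 ht.size_pos

lemma Coalesced.one_lt_shape {L : FlatLayout} (hc : L.Coalesced) (hv : L.Valid) {p : ℕ × ℕ}
    (hp : p ∈ L) : 1 < p.1 := by
  have := hv p hp
  have := hc.1 p hp
  omega

lemma Coalesced.tail {p : ℕ × ℕ} {t : FlatLayout} (hc : Coalesced (p :: t)) : t.Coalesced :=
  ⟨fun q hq => hc.1 q (List.mem_cons_of_mem p hq), hc.2.tail⟩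

lemma Coalesced.head_shape_le {s s' d : ℕ} {t t' : FlatLayout} (hc : Coalesced ((s, d) :: t))
    (hv : Valid ((s, d) :: t)) (hv' : Valid ((s', d) :: t'))
    (hsize : size ((s, d) :: t) = size ((s', d) :: t'))
    (hphi : ∀ x < size ((s, d) :: t), phi ((s, d) :: t) x = phi ((s', d) :: t') x) :
    s' ≤ s := by
  by_contra! hlt
  have hs' := shape_le_size_cons (s', d) (valid_cons.mp hv').2
  rcases t with _ | ⟨⟨s₂, d₂⟩, t⟩
  · simp only [size_cons, size_nil, mul_one] at hsize hs'
    omega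
  · have hs : 0 < s := (valid_cons.mp hv).1
    have hs₂ : 1 < s₂ := hc.one_lt_shape (p := (s₂, d₂)) hv (by simp)
    have hs_lt : s < size ((s, d) :: (s₂, d₂) :: t) := by
      have := shape_le_size_cons (s₂, d₂) (valid_cons.mp (valid_cons.mp hv).2).2
      simp only [size_cons] at this ⊢
      exact lt_mul_of_one_lt_right hs (by omega)
    have h := hphi s hs_lt
    rw [phi_cons_self d s₂ d₂ t hs hs₂, phi_cons_of_lt d t' hlt] at h
    exact (List.isChain_cons_cons.mp hc.2).1 h.symm

theorem Coalesced.eq {A B : FlatLayout} (hAc : A.Coalesced) (hAv : A.Valid)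
    (hBc : B.Coalesced) (hBv : B.Valid) (hsize : size A = size B)
    (hphi : ∀ x < size A, phi A x = phi B x) : A = B := by
  induction A generalizing B with
  | nil =>
    rcases B with _ | ⟨q, t'⟩
    · rfl
    · have := hBc.one_lt_shape hBv (List.mem_cons_self ..)
      have := shape_le_size_cons q (valid_cons.mp hBv).2
      simp only [size_nil] at hsize
      omega
  | cons p t ih =>
    have hp := hAc.one_lt_shape hAv (List.mem_cons_self ..)
    have hpA := shape_le_size_cons p (valid_cons.mp hAv).2
    rcases B with _ | ⟨q, t'⟩
    · simp only [size_nil] at hsize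
      omega
    obtain ⟨s, d⟩ := p
    obtain ⟨s', d'⟩ := q
    have hq := hBc.one_lt_shape hBv (List.mem_cons_self ..)
    obtain rfl : d = d' := by
      simpa [phi_cons_of_lt _ _ hp, phi_cons_of_lt _ _ hq] using hphi 1 (hp.trans_le hpA)
    obtain rfl : s = s' := le_antisymm
      (hBc.head_shape_le hBv hAv hsize.symm fun x hx => (hphi x (hsize ▸ hx)).symm)
      (hAc.head_shape_le hAv hBv hsize hphi)
    have hs : 0 < s := by omega
    congr 1
    refine ih hAc.tail (valid_cons.mp hAv).2 hBc.tail (valid_cons.mp hBv).2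
      (Nat.eq_of_mul_eq_mul_left hs hsize) fun y hy => ?_
    rw [← phi_cons_mul d t hs, ← phi_cons_mul d t' hs]
    exact hphi _ (by simpa [mul_comm] using Nat.mul_lt_mul_of_pos_left hy hs)

end FlatLayout

open FlatLayout in
theorem coal_minimal_rank (L : FlatLayout) (hL : L.Valid) :
    ∀ L' : FlatLayout, L'.Valid →
      (size L' = size L ∧ ∀ x < size L, phi L' x = phi L x) →
      rank (coal L) ≤ rank L' ∧ (rank (coal L) = rank L' ↔ L' = coal L) := by
  intro L' hL' ⟨hsize, hphi⟩
  have hcoal : coal L' = coal L := by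
    refine (coalesced_coal L').eq hL'.coal (coalesced_coal L) hL.coal
      (by rw [size_coal, size_coal, hsize]) fun x hx => ?_
    rw [phi_coal, phi_coal]
    exact hphi x (by rwa [size_coal, hsize] at hx)
  refine ⟨hcoal ▸ rank_coal_le L', ⟨fun h => ?_, fun h => h ▸ rfl⟩⟩
  rw [← hcoal] at h ⊢
  exact (coal_eq_self_of_rank_eq h).symm
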